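/- arXiv:2505.06050 — 4 statements merged into one kernel-verified Lean document; each statement's English description precedes it below -/
import Mathlib

section
/- Let p be a probability distribution on a finite alphabet X and t a type of length-n sequences. Then the probability under the i.i.d. measure p^n of the set of sequences of type t satisfies (n+1)^{-|X|} 2^{−n D(t‖p)} ≤ p^n(T_n^t) ≤ 2^{−n D(t‖p)}. -/
/-- The empirical distribution (type) of a sequence `xs : Fin n → X`. -/
noncomputable def typeOf {X : Type*} [Fintype X] [DecidableEq X] (n : ℕ) (xs : Fin n → X) :
    X → ℝ :=
  fun a => ((Finset.univ.filter fun i => xs i = a).card : ℝ) / n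

/-- `p` is a probability distribution on the finite set `X`. -/
def IsProb {X : Type*} [Fintype X] (p : X → ℝ) : Prop :=
  (∀ x, 0 ≤ p x) ∧ ∑ x, p x = 1

/-- Base-2 relative entropy (Kullback–Leibler divergence). -/
noncomputable def Dkl {X : Type*} [Fintype X] (t p : X → ℝ) : ℝ :=
  ∑ x, t x * Real.logb 2 (t x / p x)

/-!
For a sequence `xs` of type `t`, `p^n(xs) = ∏ₐ p(a)^{n t(a)} = 2^{-n D(t‖p)} · t^n(xs)`, so
`p^n(T_n^t) = 2^{-n D(t‖p)} · t^n(T_n^t)` and it suffices to show `(n+1)^{-|X|} ≤ t^n(T_n^t) ≤ 1`.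
The upper bound holds as `t^n` is a probability. For the lower bound, the type classes partition
`X^n` into at most `(n+1)^{|X|}` pieces, and `T_n^t` has the largest `t^n`-mass among them: with
the multinomial count `|T_n^s| = n! / ∏ₐ (n s(a))!` (orbit–stabilizer for the permutations of
positions), this comes down to `k! · k^l ≤ l! · k^k` for the counts `k = n t(a)`, `l = n s(a)`
of each letter `a`.
-/

open Finset Equiv
open scoped Nat

lemma factorial_mul_pow_le_factorial_mul_pow (a b : ℕ) : b ! * b ^ a ≤ a ! * b ^ b := by
  rcases le_total a b with hab | hba
  · have h := Nat.factorial_mul_descFactorial (Nat.sub_le b a)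
    rw [Nat.sub_sub_self hab] at h
    calc b ! * b ^ a = a ! * b.descFactorial (b - a) * b ^ a := by rw [h]
      _ ≤ a ! * b ^ (b - a) * b ^ a := by gcongr; exact Nat.descFactorial_le_pow b _
      _ = a ! * b ^ b := by rw [mul_assoc, ← pow_add, Nat.sub_add_cancel hab]
  · have h : b ! * (b + 1) ^ (a - b) ≤ (b + (a - b))! := Nat.factorial_mul_pow_le_factorial
    rw [Nat.add_sub_cancel' hba] at h
    calc b ! * b ^ a = b ! * b ^ (a - b) * b ^ b := by
          rw [mul_assoc, ← pow_add, Nat.sub_add_cancel hba]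
      _ ≤ a ! * b ^ b := by
          gcongr
          exact (Nat.mul_le_mul_left _ (Nat.pow_le_pow_left b.le_succ _)).trans h

section SymbolCount

variable {X : Type*} [DecidableEq X] {n : ℕ}

def symbolCount (xs : Fin n → X) (a : X) : ℕ := #{i | xs i = a}

lemma symbolCount_le (xs : Fin n → X) (a : X) : symbolCount xs a ≤ n :=
  (card_filter_le _ _).trans_eq (card_fin n)

lemma symbolCount_comp_perm (xs : Fin n → X) (σ : Perm (Fin n)) :
    symbolCount (xs ∘ σ) = symbolCount xs := by
  funext a
  simp only [symbolCount, ← Fintype.card_subtype]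
  exact Fintype.card_congr (σ.subtypeEquiv fun i => by simp)

lemma exists_perm_comp_eq_of_symbolCount_eq {xs ys : Fin n → X}
    (h : symbolCount ys = symbolCount xs) : ∃ σ : Perm (Fin n), xs ∘ σ = ys := by
  have hfib (a : X) : Fintype.card {i // ys i = a} = Fintype.card {i // xs i = a} := by
    rw [Fintype.card_subtype, Fintype.card_subtype]
    exact congrFun h a
  refine ⟨(sigmaFiberEquiv ys).symm.trans
    ((sigmaCongrRight fun a => Fintype.equivOfCardEq (hfib a)).trans (sigmaFiberEquiv xs)), ?_⟩
  funext i
  exact ((Fintype.equivOfCardEq (hfib (ys i))) ⟨i, rfl⟩).2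

end SymbolCount

section TypeClass

variable {X : Type*} [Fintype X] [DecidableEq X] {n : ℕ}

def typeClass (n : ℕ) (k : X → ℕ) : Finset (Fin n → X) := {xs | symbolCount xs = k}

lemma sum_symbolCount (xs : Fin n → X) : ∑ a, symbolCount xs a = n := by
  simpa [symbolCount] using
    (card_eq_sum_card_fiberwise (f := xs) (s := univ) (t := univ) fun _ _ => mem_univ _).symm

lemma prod_comp_eq_prod_pow_symbolCount {M : Type*} [CommMonoid M] (q : X → M)
    (xs : Fin n → X) : ∏ i, q (xs i) = ∏ a, q a ^ symbolCount xs a := by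
  rw [Finset.prod_comp, prod_subset (subset_univ _)]
  · rfl
  · intro a _ ha
    simp only [mem_image, mem_univ, true_and, not_exists] at ha
    simp [ha]

lemma orbit_domMulAct_eq_typeClass (xs : Fin n → X) :
    MulAction.orbit (Perm (Fin n))ᵈᵐᵃ xs = typeClass n (symbolCount xs) := by
  ext ys
  simp only [MulAction.mem_orbit_iff, typeClass, coe_filter, mem_univ, true_and,
    Set.mem_ofPred_eq]
  constructor
  · rintro ⟨σ, rfl⟩
    exact symbolCount_comp_perm xs _
  · intro h
    obtain ⟨σ, rfl⟩ := exists_perm_comp_eq_of_symbolCount_eq h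
    exact ⟨DomMulAct.mk σ, rfl⟩

lemma card_typeClass_mul_prod_factorial (xs : Fin n → X) :
    #(typeClass n (symbolCount xs)) * ∏ a, (symbolCount xs a)! = n ! := by
  have hstab : Nat.card (MulAction.stabilizer (Perm (Fin n))ᵈᵐᵃ xs) =
      ∏ a, (symbolCount xs a)! := by
    rw [Nat.card_congr (subtypeEquiv DomMulAct.mk.symm fun _ => DomMulAct.mem_stabilizer_iff :
        MulAction.stabilizer (Perm (Fin n))ᵈᵐᵃ xs ≃ {σ : Perm (Fin n) // xs ∘ σ = xs}),
      Nat.card_eq_fintype_card, DomMulAct.stabilizer_card]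
    simp only [Fintype.card_subtype, symbolCount]
  rw [← hstab, mul_comm, ← Set.ncard_coe_finset, ← orbit_domMulAct_eq_typeClass,
    ← MulAction.index_stabilizer, Subgroup.card_mul_index, Nat.card_congr DomMulAct.mk.symm,
    Nat.card_perm, Nat.card_fin]

lemma card_typeClass_mul_prod_pow_le (xs ys : Fin n → X) :
    #(typeClass n (symbolCount ys)) * ∏ a, symbolCount xs a ^ symbolCount ys a ≤
      #(typeClass n (symbolCount xs)) * ∏ a, symbolCount xs a ^ symbolCount xs a := by
  set k := symbolCount xs
  set l := symbolCount ys
  have hpos : 0 < (∏ a, (l a)!) * ∏ a, (k a)! := by positivity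
  refine Nat.le_of_mul_le_mul_right ?_ hpos
  calc #(typeClass n l) * (∏ a, k a ^ l a) * ((∏ a, (l a)!) * ∏ a, (k a)!)
      = n ! * ∏ a, ((k a)! * k a ^ l a) := by
        rw [← card_typeClass_mul_prod_factorial ys, prod_mul_distrib]; ring
    _ ≤ n ! * ∏ a, ((l a)! * k a ^ k a) := by
        gcongr n ! * ?_
        exact prod_le_prod' fun a _ => factorial_mul_pow_le_factorial_mul_pow _ _
    _ = #(typeClass n k) * (∏ a, k a ^ k a) * ((∏ a, (l a)!) * ∏ a, (k a)!) := by
        rw [← card_typeClass_mul_prod_factorial xs, prod_mul_distrib]; ring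

end TypeClass

lemma pow_eq_rpow_neg_mul_logb_mul_pow {p t : ℝ} (hp : 0 < p) (ht : 0 < t) (k : ℕ) :
    p ^ k = 2 ^ (-(k * Real.logb 2 (t / p))) * t ^ k := by
  rw [show -(k * Real.logb 2 (t / p)) = Real.logb 2 (t / p) * -k by ring,
    Real.rpow_mul zero_le_two, Real.rpow_logb two_pos (by norm_num) (div_pos ht hp),
    Real.rpow_neg (div_pos ht hp).le, Real.rpow_natCast, div_pow, inv_div,
    div_mul_cancel₀ _ (pow_ne_zero _ ht.ne')]

lemma prod_pow_eq_rpow_neg_sum_mul_prod_pow {X : Type*} [Fintype X] (p t : X → ℝ) (k : X → ℕ)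
    (hpos : ∀ a, k a ≠ 0 → 0 < p a ∧ 0 < t a) :
    ∏ a, p a ^ k a = 2 ^ (-∑ a, k a * Real.logb 2 (t a / p a)) * ∏ a, t a ^ k a := by
  rw [← sum_neg_distrib, Real.rpow_sum_of_pos two_pos, ← prod_mul_distrib]
  refine prod_congr rfl fun a _ => ?_
  by_cases hk : k a = 0
  · simp [hk]
  · obtain ⟨hp, ht⟩ := hpos a hk
    exact pow_eq_rpow_neg_mul_logb_mul_pow hp ht _

section TypeProbability

variable {X : Type*} [Fintype X] [DecidableEq X] {n : ℕ}

lemma typeOf_apply (xs : Fin n → X) (a : X) : typeOf n xs a = symbolCount xs a / n := rfl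

lemma typeOf_nonneg (xs : Fin n → X) (a : X) : 0 ≤ typeOf n xs a := by
  rw [typeOf_apply]; positivity

lemma natCast_mul_typeOf (xs : Fin n → X) (a : X) :
    (n : ℝ) * typeOf n xs a = symbolCount xs a := by
  rcases Nat.eq_zero_or_pos n with rfl | hn
  · simp [symbolCount]
  · exact mul_div_cancel₀ _ (by positivity)

lemma typeOf_eq_typeOf_iff {xs ys : Fin n → X} :
    typeOf n xs = typeOf n ys ↔ symbolCount xs = symbolCount ys := by
  rcases Nat.eq_zero_or_pos n with rfl | hn
  · simp only [Subsingleton.elim xs ys]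
  · have hn' : (n : ℝ) ≠ 0 := by positivity
    simp only [funext_iff, typeOf_apply, div_left_inj' hn', Nat.cast_inj]

lemma sum_prod_typeOf (xs : Fin n → X) : ∑ ys : Fin n → X, ∏ i, typeOf n xs (ys i) = 1 := by
  rw [← Fintype.sum_pow]
  rcases Nat.eq_zero_or_pos n with rfl | hn
  · exact pow_zero _
  · have hsum : ∑ a, typeOf n xs a = 1 := by
      simp only [typeOf_apply, ← sum_div, ← Nat.cast_sum, sum_symbolCount]
      exact div_self (by positivity)
    rw [hsum, one_pow]

lemma sum_typeClass_prod_typeOf_le_one (xs : Fin n → X) (k : X → ℕ) :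
    ∑ ys ∈ typeClass n k, ∏ i, typeOf n xs (ys i) ≤ 1 :=
  sum_prod_typeOf xs ▸ sum_le_sum_of_subset_of_nonneg (subset_univ _)
    fun ys _ _ => prod_nonneg fun i _ => typeOf_nonneg xs (ys i)

lemma sum_typeClass_prod_typeOf (xs ys : Fin n → X) :
    ∑ zs ∈ typeClass n (symbolCount ys), ∏ i, typeOf n xs (zs i) =
      (#(typeClass n (symbolCount ys)) * ∏ a, symbolCount xs a ^ symbolCount ys a : ℕ) /
        (n : ℝ) ^ n := by
  have hprod : ∀ zs ∈ typeClass n (symbolCount ys), ∏ i, typeOf n xs (zs i) =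
      (∏ a, symbolCount xs a ^ symbolCount ys a : ℕ) / (n : ℝ) ^ n := by
    intro zs hzs
    rw [prod_comp_eq_prod_pow_symbolCount, (mem_filter.1 hzs).2]
    simp only [typeOf_apply, div_pow, prod_div_distrib, prod_pow_eq_pow_sum, sum_symbolCount,
      Nat.cast_prod, Nat.cast_pow]
  rw [sum_congr rfl hprod, sum_const, nsmul_eq_mul, Nat.cast_mul, mul_div_assoc]

lemma sum_typeClass_prod_typeOf_le (xs ys : Fin n → X) :
    ∑ zs ∈ typeClass n (symbolCount ys), ∏ i, typeOf n xs (zs i) ≤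
      ∑ zs ∈ typeClass n (symbolCount xs), ∏ i, typeOf n xs (zs i) := by
  rw [sum_typeClass_prod_typeOf, sum_typeClass_prod_typeOf]
  gcongr ?_ / _
  exact_mod_cast card_typeClass_mul_prod_pow_le xs ys

lemma card_image_symbolCount_le :
    #(univ.image (symbolCount (X := X) (n := n))) ≤ (n + 1) ^ Fintype.card X :=
  calc _ ≤ #(Fintype.piFinset fun _ : X => range (n + 1)) := by
        refine card_le_card fun k hk => ?_
        obtain ⟨ys, -, rfl⟩ := mem_image.1 hk
        simpa [Fintype.mem_piFinset, Nat.lt_succ_iff] using symbolCount_le ys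
    _ = (n + 1) ^ Fintype.card X := by simp

lemma rpow_neg_card_le_sum_typeClass_prod_typeOf (xs : Fin n → X) :
    ((n : ℝ) + 1) ^ (-(Fintype.card X : ℝ)) ≤
      ∑ ys ∈ typeClass n (symbolCount xs), ∏ i, typeOf n xs (ys i) := by
  set M := ∑ ys ∈ typeClass n (symbolCount xs), ∏ i, typeOf n xs (ys i)
  have hone : 1 ≤ ((n : ℝ) + 1) ^ Fintype.card X * M :=
    calc (1 : ℝ) = ∑ ys : Fin n → X, ∏ i, typeOf n xs (ys i) := (sum_prod_typeOf xs).symm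
      _ = ∑ k ∈ univ.image symbolCount, ∑ ys ∈ typeClass n k, ∏ i, typeOf n xs (ys i) :=
          (sum_fiberwise_of_maps_to (fun ys _ => mem_image_of_mem _ (mem_univ ys)) _).symm
      _ ≤ ∑ k ∈ univ.image symbolCount, M := sum_le_sum fun k hk => by
          obtain ⟨ys, -, rfl⟩ := mem_image.1 hk
          exact sum_typeClass_prod_typeOf_le xs ys
      _ = #(univ.image symbolCount) * M := by rw [sum_const, nsmul_eq_mul]
      _ ≤ ((n : ℝ) + 1) ^ Fintype.card X * M := by
          gcongr
          · exact sum_nonneg fun ys _ => prod_nonneg fun i _ => typeOf_nonneg xs (ys i)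
          · exact_mod_cast card_image_symbolCount_le
  rw [Real.rpow_neg (by positivity), Real.rpow_natCast]
  exact (inv_le_iff_one_le_mul₀' (by positivity)).2 hone

lemma prod_eq_rpow_neg_mul_Dkl_mul_prod_typeOf {p : X → ℝ} (hp : ∀ a, 0 ≤ p a)
    {xs : Fin n → X} (hac : ∀ a, p a = 0 → typeOf n xs a = 0) {ys : Fin n → X}
    (hys : ys ∈ typeClass n (symbolCount xs)) :
    ∏ i, p (ys i) = 2 ^ (-(n * Dkl (typeOf n xs) p)) * ∏ i, typeOf n xs (ys i) := by
  have hD : (n : ℝ) * Dkl (typeOf n xs) p =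
      ∑ a, symbolCount xs a * Real.logb 2 (typeOf n xs a / p a) := by
    simp only [Dkl, mul_sum, ← mul_assoc, natCast_mul_typeOf]
  rw [prod_comp_eq_prod_pow_symbolCount, prod_comp_eq_prod_pow_symbolCount,
    (mem_filter.1 hys).2, hD]
  refine prod_pow_eq_rpow_neg_sum_mul_prod_pow _ _ _ fun a ha => ?_
  have hn : (0 : ℝ) < n := by
    exact_mod_cast (Nat.pos_of_ne_zero ha).trans_le (symbolCount_le xs a)
  have ht : 0 < typeOf n xs a := by
    rw [typeOf_apply]
    exact div_pos (by exact_mod_cast Nat.pos_of_ne_zero ha) hn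
  exact ⟨(hp a).lt_of_ne fun h => ht.ne' (hac a h.symm), ht⟩

end TypeProbability

/-- Probability of a type class under the i.i.d. measure:
`(n+1)^{-|X|} 2^{-n D(t‖p)} ≤ p^n(T_n^t) ≤ 2^{-n D(t‖p)}`. -/
theorem type_class_prob_bounds {X : Type*} [Fintype X] [DecidableEq X] (n : ℕ) (p t : X → ℝ)
    (hp : IsProb p) (ht : ∃ xs : Fin n → X, typeOf n xs = t)
    (hac : ∀ x, p x = 0 → t x = 0) :
    ((n : ℝ) + 1) ^ (-(Fintype.card X : ℝ)) * 2 ^ (-((n : ℝ) * Dkl t p)) ≤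
        (∑ xs : {xs : Fin n → X // typeOf n xs = t}, ∏ i, p (xs.1 i)) ∧
      (∑ xs : {xs : Fin n → X // typeOf n xs = t}, ∏ i, p (xs.1 i)) ≤
        2 ^ (-((n : ℝ) * Dkl t p)) := by
  obtain ⟨xs, rfl⟩ := ht
  have hmass : ∑ ys : {ys : Fin n → X // typeOf n ys = typeOf n xs}, ∏ i, p (ys.1 i) =
      (∑ ys ∈ typeClass n (symbolCount xs), ∏ i, typeOf n xs (ys i)) *
        2 ^ (-((n : ℝ) * Dkl (typeOf n xs) p)) := by
    rw [sum_mul, ← sum_subtype (typeClass n (symbolCount xs))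
      (fun ys => by simp [typeClass, typeOf_eq_typeOf_iff]) fun ys => ∏ i, p (ys i)]
    refine sum_congr rfl fun ys hys => ?_
    rw [prod_eq_rpow_neg_mul_Dkl_mul_prod_typeOf hp.1 hac hys, mul_comm]
  rw [hmass]
  exact ⟨by gcongr; exact rpow_neg_card_le_sum_typeClass_prod_typeOf xs,
    mul_le_of_le_one_left (by positivity) (sum_typeClass_prod_typeOf_le_one xs _)⟩
end

section
/- (Variational expression of classical Rényi divergence, α ∈ (0,1)): Let ρ, σ be nonnegative functions on a finite set X with ρ a probability distribution and supp(ρ) not disjoint from supp(σ). Then for α ∈ (0,1), D_α(ρ‖σ) = min_{τ} [ D(τ‖σ) − (α/(α−1)) D(τ‖ρ) ], where the minimum is over probability distributions τ with supp(τ) ⊆ supp(ρ) ∩ supp(σ), D_α(ρ‖σ) = (1/(α−1)) log₂ ∑_x ρ(x)^α σ(x)^{1−α}, and D is base-2 relative entropy. -/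
open Finset

section

variable {X : Type*}

noncomputable def rpowMix (α : ℝ) (ρ σ : X → ℝ) (x : X) : ℝ :=
  ρ x ^ α * σ x ^ (1 - α)

lemma rpowMix_nonneg {α : ℝ} {ρ σ : X → ℝ} (hρ : ∀ x, 0 ≤ ρ x) (hσ : ∀ x, 0 ≤ σ x) (x : X) :
    0 ≤ rpowMix α ρ σ x :=
  mul_nonneg (Real.rpow_nonneg (hρ x) _) (Real.rpow_nonneg (hσ x) _)

lemma rpowMix_pos {α : ℝ} {ρ σ : X → ℝ} {x : X} (hρ : 0 < ρ x) (hσ : 0 < σ x) :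
    0 < rpowMix α ρ σ x :=
  mul_pos (Real.rpow_pos_of_pos hρ _) (Real.rpow_pos_of_pos hσ _)

lemma rpowMix_eq_zero {α : ℝ} (hα : α ∈ Set.Ioo (0 : ℝ) 1) {ρ σ : X → ℝ} {x : X}
    (hx : ρ x = 0 ∨ σ x = 0) : rpowMix α ρ σ x = 0 := by
  rcases hx with h | h
  · simp [rpowMix, h, Real.zero_rpow hα.1.ne']
  · simp [rpowMix, h, Real.zero_rpow (sub_pos.2 hα.2).ne']

variable [Fintype X]

lemma isProb_div_sum {q : X → ℝ} (hq : ∀ x, 0 ≤ q x) (hQ : ∑ x, q x ≠ 0) :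
    IsProb fun x => q x / ∑ y, q y :=
  ⟨fun x => div_nonneg (hq x) (sum_nonneg fun y _ => hq y), by rw [← sum_div, div_self hQ]⟩

lemma sub_div_le_mul_log_div_add_log {t q Q : ℝ} (ht : 0 ≤ t) (hq : 0 ≤ q) (hQ : 0 < Q)
    (htq : t ≠ 0 → q ≠ 0) : t - q / Q ≤ t * (Real.log (t / q) + Real.log Q) := by
  rcases ht.eq_or_lt with rfl | ht
  · simpa using div_nonneg hq hQ.le
  have hq : 0 < q := hq.lt_of_ne' (htq ht.ne')
  have hlog := Real.one_sub_inv_le_log_of_pos (show 0 < Q * t / q by positivity)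
  rw [Real.log_div (by positivity) hq.ne', Real.log_mul hQ.ne' ht.ne'] at hlog
  calc t - q / Q = t * (1 - (Q * t / q)⁻¹) := by field_simp
    _ ≤ t * (Real.log (t / q) + Real.log Q) := by
      rw [Real.log_div ht.ne' hq.ne']; gcongr; linarith

/-- Gibbs' inequality against an unnormalised reference `q`. -/
theorem neg_logb_sum_le_Dkl {τ q : X → ℝ} (hτ : IsProb τ) (hq : ∀ x, 0 ≤ q x)
    (habs : ∀ x, τ x ≠ 0 → q x ≠ 0) : -Real.logb 2 (∑ x, q x) ≤ Dkl τ q := by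
  set Q := ∑ x, q x
  have hQ : 0 < Q := by
    obtain ⟨x, -, hx⟩ := exists_ne_zero_of_sum_ne_zero (hτ.2.symm ▸ one_ne_zero)
    exact sum_pos' (fun y _ => hq y) ⟨x, mem_univ x, (hq x).lt_of_ne' (habs x hx)⟩
  have hsum : 0 ≤ ∑ x, τ x * Real.log (τ x / q x) + Real.log Q :=
    calc 0 = ∑ x, (τ x - q x / Q) := by
          rw [sum_sub_distrib, ← sum_div, hτ.2, div_self hQ.ne', sub_self]
      _ ≤ ∑ x, τ x * (Real.log (τ x / q x) + Real.log Q) :=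
          sum_le_sum fun x _ => sub_div_le_mul_log_div_add_log (hτ.1 x) (hq x) hQ (habs x)
      _ = ∑ x, τ x * Real.log (τ x / q x) + Real.log Q := by
          simp only [mul_add, sum_add_distrib, ← sum_mul, hτ.2, one_mul]
  have hDkl : Dkl τ q = (∑ x, τ x * Real.log (τ x / q x)) / Real.log 2 := by
    simp only [Dkl, Real.logb, sum_div, mul_div_assoc]
  rw [hDkl, Real.logb, ← neg_div]
  gcongr
  linarith

theorem Dkl_div_sum_self {q : X → ℝ} (hQ : ∑ x, q x ≠ 0) :
    Dkl (fun x => q x / ∑ y, q y) q = -Real.logb 2 (∑ x, q x) := by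
  set Q := ∑ x, q x
  have hterm : ∀ x, q x / Q * Real.logb 2 (q x / Q / q x) = q x / Q * -Real.logb 2 Q := by
    intro x
    rcases eq_or_ne (q x) 0 with h | h
    · simp [h]
    · rw [div_div_cancel_left' h, Real.logb_inv]
  rw [Dkl, sum_congr rfl fun x _ => hterm x, ← sum_mul, ← sum_div, div_self hQ, one_mul]

theorem Dkl_sub_mul_Dkl_eq {ρ σ τ : X → ℝ} (hρ : ∀ x, 0 ≤ ρ x) (hσ : ∀ x, 0 ≤ σ x)
    (hsupp : ∀ x, (ρ x = 0 ∨ σ x = 0) → τ x = 0) {α : ℝ} (hα : α ≠ 1) :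
    Dkl τ σ - α / (α - 1) * Dkl τ ρ = (1 - α)⁻¹ * Dkl τ (rpowMix α ρ σ) := by
  simp only [Dkl, mul_sum, ← sum_sub_distrib]
  refine sum_congr rfl fun x _ => ?_
  rcases eq_or_ne (τ x) 0 with hτ | hτ
  · simp [hτ]
  have hρx : 0 < ρ x := (hρ x).lt_of_ne' fun h => hτ (hsupp x (.inl h))
  have hσx : 0 < σ x := (hσ x).lt_of_ne' fun h => hτ (hsupp x (.inr h))
  have hlogq : Real.logb 2 (rpowMix α ρ σ x)
      = α * Real.logb 2 (ρ x) + (1 - α) * Real.logb 2 (σ x) := by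
    rw [rpowMix, Real.logb_mul (Real.rpow_pos_of_pos hρx _).ne' (Real.rpow_pos_of_pos hσx _).ne',
      Real.logb_rpow_eq_mul_logb_of_pos hρx, Real.logb_rpow_eq_mul_logb_of_pos hσx]
  rw [Real.logb_div hτ hσx.ne', Real.logb_div hτ hρx.ne',
    Real.logb_div hτ (rpowMix_pos hρx hσx).ne', hlogq]
  have : α - 1 ≠ 0 := sub_ne_zero.2 hα
  have : 1 - α ≠ 0 := sub_ne_zero.2 hα.symm
  field_simp
  ring

end

/-- Variational expression of the classical Rényi divergence for `α ∈ (0,1)`: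
`D_α(ρ‖σ) = min_τ [ D(τ‖σ) - (α/(α-1)) D(τ‖ρ) ]`, the minimum over probability
distributions `τ` with `supp τ ⊆ supp ρ ∩ supp σ`. -/
theorem renyi_divergence_variational {X : Type*} [Fintype X] (ρ σ : X → ℝ)
    (hρ : IsProb ρ) (hσ0 : ∀ x, 0 ≤ σ x) (hover : ∃ x, ρ x ≠ 0 ∧ σ x ≠ 0)
    (α : ℝ) (hα : α ∈ Set.Ioo (0:ℝ) 1) :
    IsLeast {v | ∃ τ : X → ℝ, IsProb τ ∧ (∀ x, (ρ x = 0 ∨ σ x = 0) → τ x = 0) ∧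
        v = Dkl τ σ - (α / (α - 1)) * Dkl τ ρ}
      ((1 / (α - 1)) * Real.logb 2 (∑ x, ρ x ^ α * σ x ^ (1 - α))) := by
  set q := rpowMix α ρ σ
  change IsLeast _ (1 / (α - 1) * Real.logb 2 (∑ x, q x))
  have hq : ∀ x, 0 ≤ q x := rpowMix_nonneg hρ.1 hσ0
  have hQ : 0 < ∑ x, q x := by
    obtain ⟨x, hρx, hσx⟩ := hover
    exact sum_pos' (fun y _ => hq y)
      ⟨x, mem_univ x, rpowMix_pos ((hρ.1 x).lt_of_ne' hρx) ((hσ0 x).lt_of_ne' hσx)⟩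
  have hobj : ∀ τ, (∀ x, (ρ x = 0 ∨ σ x = 0) → τ x = 0) →
      Dkl τ σ - α / (α - 1) * Dkl τ ρ = (1 - α)⁻¹ * Dkl τ q :=
    fun τ hsupp => Dkl_sub_mul_Dkl_eq hρ.1 hσ0 hsupp hα.2.ne
  have hcoef : 1 / (α - 1) = -(1 - α)⁻¹ := by rw [one_div, ← inv_neg, neg_sub]
  have hmin_supp : ∀ x, (ρ x = 0 ∨ σ x = 0) → q x / ∑ y, q y = 0 := fun x hx => by
    simp only [q, rpowMix_eq_zero hα hx, zero_div]
  refine ⟨⟨fun x => q x / ∑ y, q y, isProb_div_sum hq hQ.ne', hmin_supp, ?_⟩, ?_⟩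
  · rw [hobj _ hmin_supp, Dkl_div_sum_self hQ.ne', hcoef]
    ring
  · rintro _ ⟨τ, hτ, hsupp, rfl⟩
    have habs : ∀ x, τ x ≠ 0 → q x ≠ 0 := fun x hx =>
      (rpowMix_pos ((hρ.1 x).lt_of_ne' fun h => hx (hsupp x (.inl h)))
        ((hσ0 x).lt_of_ne' fun h => hx (hsupp x (.inr h)))).ne'
    rw [hobj τ hsupp, hcoef, neg_mul, ← mul_neg]
    have : 0 < 1 - α := sub_pos.2 hα.2
    gcongr
    exact neg_logb_sum_le_Dkl hτ hq habs
end

section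
/- Let H = ⊕_{i∈I} H_i be a finite orthogonal decomposition of a finite-dimensional Hilbert space with projections Π_i onto H_i. Let ρ, σ be positive semidefinite operators on H and assume σ = ∑_i σ_i with supp(σ_i) ⊆ H_i. Then F(∑_i Π_i ρ Π_i, σ) ≤ √|I| · F(ρ, σ), where F(A,B) = ‖√A √B‖₁ is the fidelity. -/
/-!
Put `M = √σ ρ √σ`, so that `F(ρ, σ) = Tr √M`. Since `σ` is block diagonal, `√σ` commutes
with every `Πᵢ`; hence `√σ (∑ᵢ Πᵢ ρ Πᵢ) √σ = ∑ᵢ Πᵢ M Πᵢ`, and as the blocks `Πᵢ M Πᵢ` live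
on orthogonal subspaces, `F(∑ᵢ Πᵢ ρ Πᵢ, σ) = ∑ᵢ Tr √(Πᵢ M Πᵢ)`. Writing
`Πᵢ M Πᵢ = |M^{1/4} · M^{1/4} Πᵢ|²`, Hölder's inequality `‖Y Z‖₁ ≤ ‖Y‖₂ ‖Z‖₂` bounds the
`i`-th term by `√(Tr √M) · √(Tr Πᵢ √M Πᵢ)`, and Cauchy–Schwarz over `i`, together with
`∑ᵢ Tr Πᵢ √M Πᵢ = Tr √M`, gives the factor `√|I|`.
-/

open scoped ComplexOrder
open scoped Classical
open Matrix

/-- The positive semidefinite square root of a positive semidefinite matrix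
(the definition `Matrix.PosSemidef.sqrt` of the older Mathlib, since removed). -/
noncomputable def Matrix.PosSemidef.sqrt {n : Type*} [Fintype n] [DecidableEq n] {𝕜 : Type*}
    [RCLike 𝕜] {A : Matrix n n 𝕜} (hA : A.PosSemidef) : Matrix n n 𝕜 :=
  hA.1.eigenvectorUnitary.1 * diagonal ((↑) ∘ (√·) ∘ hA.1.eigenvalues) *
    (star hA.1.eigenvectorUnitary : Matrix n n 𝕜)

/-- The fidelity `F(ρ,σ) = Tr √(√ρ σ √ρ)` of two positive semidefinite matrices
(junk value `0` if either matrix fails to be positive semidefinite). -/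
noncomputable def mfid {d : ℕ} (ρ σ : Matrix (Fin d) (Fin d) ℂ) : ℝ :=
  if h : ρ.PosSemidef ∧ σ.PosSemidef then
    (((h.2.mul_mul_conjTranspose_same h.1.sqrt).sqrt).trace).re
  else 0

namespace Matrix.PosSemidef

open scoped MatrixOrder

variable {n : Type*} [Fintype n] {A B : Matrix n n ℂ}

lemma re_trace_nonneg (hA : A.PosSemidef) : 0 ≤ A.trace.re :=
  (Complex.nonneg_iff.mp hA.trace_nonneg).1

variable [DecidableEq n]

lemma sqrt_eq_cfc (hA : A.PosSemidef) : hA.sqrt = cfc Real.sqrt A := by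
  rw [hA.1.cfc_eq, IsHermitian.cfc, Unitary.conjStarAlgAut_apply]
  rfl

lemma posSemidef_sqrt (hA : A.PosSemidef) : hA.sqrt.PosSemidef := by
  rw [hA.sqrt_eq_cfc, ← nonneg_iff_posSemidef]
  exact cfc_nonneg fun x _ => Real.sqrt_nonneg x

lemma sqrt_mul_self (hA : A.PosSemidef) : hA.sqrt * hA.sqrt = A := by
  have : IsSelfAdjoint A := hA.1
  rw [hA.sqrt_eq_cfc, ← cfc_mul Real.sqrt Real.sqrt A]
  conv_rhs => rw [← cfc_id' ℝ A]
  exact cfc_congr fun x hx =>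
    Real.mul_self_sqrt (spectrum_nonneg_of_nonneg (nonneg_iff_posSemidef.mpr hA) hx)

lemma eq_sqrt_of_mul_self_eq (hB : B.PosSemidef) (hA : A.PosSemidef) (h : B * B = A) :
    B = hA.sqrt := by
  have : IsSelfAdjoint B := hB.1
  rw [hA.sqrt_eq_cfc, ← h, ← pow_two, ← cfc_pow_id (R := ℝ) B 2,
    ← cfc_comp Real.sqrt (· ^ 2) B]
  conv_lhs => rw [← cfc_id' ℝ B]
  exact cfc_congr fun x hx =>
    (Real.sqrt_sq (spectrum_nonneg_of_nonneg (nonneg_iff_posSemidef.mpr hB) hx)).symm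

lemma commute_sqrt (hA : A.PosSemidef) (h : Commute A B) : Commute hA.sqrt B :=
  hA.sqrt_eq_cfc ▸ h.cfc_real _

lemma trace_sqrt (hA : A.PosSemidef) : hA.sqrt.trace = ∑ i, (√(hA.1.eigenvalues i) : ℂ) := by
  rw [Matrix.PosSemidef.sqrt, trace_mul_cycle,
    Unitary.star_mul_self_of_mem hA.1.eigenvectorUnitary.2]
  simp [trace_diagonal]

lemma trace_sqrt_eq_of_charpoly_eq (hA : A.PosSemidef) (hB : B.PosSemidef)
    (h : A.charpoly = B.charpoly) : hA.sqrt.trace = hB.sqrt.trace := by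
  rw [trace_sqrt, trace_sqrt, (hA.1.eigenvalues_eq_eigenvalues_iff hB.1).mpr h]

end Matrix.PosSemidef

namespace Matrix

variable {n : Type*} [Fintype n] [DecidableEq n]

lemma re_trace_conjTranspose_mul_le (A B : Matrix n n ℂ) :
    (Aᴴ * B).trace.re ≤ √((Aᴴ * A).trace.re) * √((Bᴴ * B).trace.re) := by
  let := toMatrixSeminormedAddCommGroup (1 : Matrix n n ℂ) PosSemidef.one
  let := toMatrixInnerProductSpace (1 : Matrix n n ℂ) PosSemidef.one
  have h := re_inner_le_norm (𝕜 := ℂ) A B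
  simp only [norm_eq_sqrt_re_inner (𝕜 := ℂ)] at h
  change (B * 1 * Aᴴ).trace.re ≤
    √((A * 1 * Aᴴ).trace.re) * √((B * 1 * Bᴴ).trace.re) at h
  simpa only [Matrix.mul_one, trace_mul_comm B, trace_mul_comm A] using h

lemma re_trace_mul_le_of_isIdempotentElem {B P : Matrix n n ℂ} (hB : B.PosSemidef)
    (hPh : Pᴴ = P) (hP : IsIdempotentElem P) : (B * P).trace.re ≤ B.trace.re := by
  have hQ : (1 - P)ᴴ * (1 - P) = 1 - P := by
    rw [conjTranspose_sub, conjTranspose_one, hPh]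
    exact hP.one_sub.eq
  have h := (hB.mul_mul_conjTranspose_same (1 - P)).trace_nonneg
  rw [trace_mul_cycle, hQ, trace_mul_comm, Matrix.mul_sub, Matrix.mul_one, trace_sub] at h
  simpa using (Complex.nonneg_iff.mp h).1

lemma exists_conjTranspose_mul_eq_sqrt (X : Matrix n n ℂ) :
    ∃ W : Matrix n n ℂ, Wᴴ * X = (posSemidef_conjTranspose_mul_self X).sqrt ∧
      IsIdempotentElem (W * Wᴴ) := by
  set B := Xᴴ * X
  have hB : IsSelfAdjoint B := (posSemidef_conjTranspose_mul_self X).1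
  have hcont (f : ℝ → ℝ) : ContinuousOn f (spectrum ℝ B) :=
    B.finite_real_spectrum.continuousOn f
  -- `G = B^{-1/2}` on the range of `B` and `0` on its kernel, so `X * G` is a partial isometry.
  set G := cfc (fun x : ℝ => (√x)⁻¹) B
  have hG : Gᴴ = G := (cfc_predicate (fun x : ℝ => (√x)⁻¹) B).star_eq
  have hGB : G * B = (posSemidef_conjTranspose_mul_self X).sqrt := by
    rw [PosSemidef.sqrt_eq_cfc]
    conv_lhs => rw [← cfc_id' ℝ B]
    rw [← cfc_mul _ _ B (hcont _) (hcont _)]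
    exact cfc_congr fun x _ => by rw [← div_eq_inv_mul, Real.div_sqrt]
  have hGBG : G * G * B * G = G := by
    conv_lhs => rw [← cfc_id' ℝ B]
    rw [← cfc_mul _ _ B (hcont _) (hcont _), ← cfc_mul _ _ B (hcont _) (hcont _),
      ← cfc_mul _ _ B (hcont _) (hcont _)]
    refine cfc_congr fun x _ => ?_
    rcases le_or_gt x 0 with hx | hx
    · simp [Real.sqrt_eq_zero'.mpr hx]
    · have := Real.sqrt_pos.mpr hx
      field_simp
      rw [Real.sq_sqrt hx.le]
  refine ⟨X * G, ?_, ?_⟩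
  · rw [conjTranspose_mul, hG, Matrix.mul_assoc, hGB]
  · rw [conjTranspose_mul, hG]
    calc X * G * (G * Xᴴ) * (X * G * (G * Xᴴ)) = X * (G * G * B * G) * G * Xᴴ := by
          simp only [B, Matrix.mul_assoc]
      _ = X * G * (G * Xᴴ) := by rw [hGBG, Matrix.mul_assoc, Matrix.mul_assoc]

lemma re_trace_sqrt_conjTranspose_mul_self_mul_le (Y Z : Matrix n n ℂ) :
    ((posSemidef_conjTranspose_mul_self (Y * Z)).sqrt.trace).re ≤
      √((Yᴴ * Y).trace.re) * √((Zᴴ * Z).trace.re) := by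
  obtain ⟨W, hWX, hW⟩ := exists_conjTranspose_mul_eq_sqrt (Y * Z)
  have hYW : ((Yᴴ * W)ᴴ * (Yᴴ * W)).trace.re ≤ (Yᴴ * Y).trace.re := by
    have hcyc : ((Yᴴ * W)ᴴ * (Yᴴ * W)).trace = (Y * Yᴴ * (W * Wᴴ)).trace := by
      rw [conjTranspose_mul, conjTranspose_conjTranspose, Matrix.mul_assoc, trace_mul_comm]
      simp only [Matrix.mul_assoc]
    rw [hcyc, trace_mul_comm Yᴴ]
    exact re_trace_mul_le_of_isIdempotentElem (posSemidef_self_mul_conjTranspose Y)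
      (by rw [conjTranspose_mul, conjTranspose_conjTranspose]) hW
  calc ((posSemidef_conjTranspose_mul_self (Y * Z)).sqrt.trace).re
      = ((Yᴴ * W)ᴴ * Z).trace.re := by
        rw [← hWX, conjTranspose_mul, conjTranspose_conjTranspose, Matrix.mul_assoc]
    _ ≤ √(((Yᴴ * W)ᴴ * (Yᴴ * W)).trace.re) * √((Zᴴ * Z).trace.re) :=
        re_trace_conjTranspose_mul_le _ _
    _ ≤ √((Yᴴ * Y).trace.re) * √((Zᴴ * Z).trace.re) := by gcongr

end Matrix

namespace Matrix.PosSemidef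

variable {n : Type*} [Fintype n] [DecidableEq n] {M : Matrix n n ℂ}

lemma re_trace_sqrt_conjTranspose_mul_mul_le (hM : M.PosSemidef) (C : Matrix n n ℂ) :
    ((hM.conjTranspose_mul_mul_same C).sqrt.trace).re ≤
      √(hM.sqrt.trace.re) * √((Cᴴ * hM.sqrt * C).trace.re) := by
  set Q := hM.posSemidef_sqrt.sqrt
  have hQ : Qᴴ = Q := hM.posSemidef_sqrt.posSemidef_sqrt.1
  have hQQ : Q * Q = hM.sqrt := hM.posSemidef_sqrt.sqrt_mul_self
  have hfactor : Cᴴ * M * C = (Q * (Q * C))ᴴ * (Q * (Q * C)) := by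
    rw [← hM.sqrt_mul_self, ← hQQ, conjTranspose_mul, conjTranspose_mul, hQ]
    simp only [Matrix.mul_assoc]
  rw [trace_sqrt_eq_of_charpoly_eq _ (posSemidef_conjTranspose_mul_self _) (by rw [hfactor])]
  convert re_trace_sqrt_conjTranspose_mul_self_mul_le Q (Q * C) using 4
  · rw [hQ, hQQ]
  · rw [conjTranspose_mul, hQ, ← hQQ]
    simp only [Matrix.mul_assoc]

end Matrix.PosSemidef

namespace OrthogonalIdempotents

variable {R I : Type*} [Semiring R] [Fintype I] {e : I → R}

lemma mul_sum_mul_mul (he : OrthogonalIdempotents e) (f : I → R) (j : I) :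
    e j * ∑ i, e i * f i * e i = e j * f j * e j := by
  rw [Finset.mul_sum, Finset.sum_eq_single j (fun i _ hij => ?_) (by simp)]
  · rw [← mul_assoc, ← mul_assoc, (he.idem j).eq]
  · rw [← mul_assoc, ← mul_assoc, he.ortho hij.symm, zero_mul, zero_mul]

lemma sum_mul_mul_mul (he : OrthogonalIdempotents e) (f : I → R) (j : I) :
    (∑ i, e i * f i * e i) * e j = e j * f j * e j := by
  rw [Finset.sum_mul, Finset.sum_eq_single j (fun i _ hij => ?_) (by simp)]
  · rw [mul_assoc, (he.idem j).eq]
  · rw [mul_assoc, he.ortho hij, mul_zero]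

lemma commute_sum_mul_mul (he : OrthogonalIdempotents e) (f : I → R) (j : I) :
    Commute (∑ i, e i * f i * e i) (e j) :=
  (he.sum_mul_mul_mul f j).trans (he.mul_sum_mul_mul f j).symm

end OrthogonalIdempotents

lemma mul_sum_mul_mul_mul_of_commute {R I : Type*} [Semiring R] [Fintype I] {e : I → R}
    {a b : R} (hb : ∀ i, Commute b (e i)) :
    b * (∑ i, e i * a * e i) * b = ∑ i, e i * (b * a * b) * e i := by
  rw [Finset.mul_sum, Finset.sum_mul]
  refine Finset.sum_congr rfl fun i _ => ?_
  calc b * (e i * a * e i) * b = (b * e i) * a * (e i * b) := by simp only [mul_assoc]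
    _ = (e i * b) * a * (b * e i) := by rw [(hb i).eq]
    _ = e i * (b * a * b) * e i := by simp only [mul_assoc]

namespace Matrix.PosSemidef

variable {n I : Type*} [Fintype n] [Fintype I] {P : I → Matrix n n ℂ} {A M : Matrix n n ℂ}

lemma sum_mul_mul (hM : M.PosSemidef) (hPh : ∀ i, (P i)ᴴ = P i) :
    (∑ i, P i * M * P i).PosSemidef :=
  posSemidef_sum _ fun i _ => by simpa only [hPh i] using hM.conjTranspose_mul_mul_same (P i)

variable [DecidableEq n]

lemma trace_sqrt_eq_sum_of_commute (hP : CompleteOrthogonalIdempotents P)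
    (hPh : ∀ i, (P i)ᴴ = P i) (hA : A.PosSemidef) (hc : ∀ i, Commute A (P i)) :
    hA.sqrt.trace = ∑ i, (hA.conjTranspose_mul_mul_same (P i)).sqrt.trace := by
  have hcompress {B : Matrix n n ℂ} {i : I} (hB : Commute B (P i)) : P i * B * P i = P i * B := by
    rw [Matrix.mul_assoc, hB.eq, ← Matrix.mul_assoc, (hP.idem i).eq]
  have hsqrt (i : I) : (hA.conjTranspose_mul_mul_same (P i)).sqrt = P i * hA.sqrt * P i := by
    have hc' := hA.commute_sqrt (hc i)
    refine (eq_sqrt_of_mul_self_eq ?_ _ ?_).symm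
    · simpa only [hPh i] using hA.posSemidef_sqrt.conjTranspose_mul_mul_same (P i)
    · rw [hPh i, hcompress hc', hcompress (hc i)]
      calc P i * hA.sqrt * (P i * hA.sqrt) = P i * (hA.sqrt * P i) * hA.sqrt := by
            simp only [Matrix.mul_assoc]
        _ = P i * P i * (hA.sqrt * hA.sqrt) := by rw [hc'.eq]; simp only [Matrix.mul_assoc]
        _ = P i * A := by rw [(hP.idem i).eq, hA.sqrt_mul_self]
  calc hA.sqrt.trace = (hA.sqrt * ∑ i, P i).trace := by rw [hP.complete, Matrix.mul_one]
    _ = ∑ i, (hA.conjTranspose_mul_mul_same (P i)).sqrt.trace := by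
      rw [Matrix.mul_sum, trace_sum]
      refine Finset.sum_congr rfl fun i _ => ?_
      rw [hsqrt, hcompress (hA.commute_sqrt (hc i)), trace_mul_comm]

lemma re_trace_sqrt_sum_mul_mul_le (hP : CompleteOrthogonalIdempotents P)
    (hPh : ∀ i, (P i)ᴴ = P i) (hM : M.PosSemidef) :
    ((hM.sum_mul_mul hPh).sqrt.trace).re ≤ √(Fintype.card I) * hM.sqrt.trace.re := by
  set s := hM.sqrt.trace.re
  set t : I → ℝ := fun i => ((P i)ᴴ * hM.sqrt * P i).trace.re
  have hs : 0 ≤ s := hM.posSemidef_sqrt.re_trace_nonneg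
  have ht (i : I) : 0 ≤ t i :=
    (hM.posSemidef_sqrt.conjTranspose_mul_mul_same (P i)).re_trace_nonneg
  have hts : ∑ i, t i = s := by
    calc ∑ i, t i = (hM.sqrt * ∑ i, P i).trace.re := by
          rw [Matrix.mul_sum, trace_sum, Complex.re_sum]
          refine Finset.sum_congr rfl fun i _ => ?_
          show ((P i)ᴴ * hM.sqrt * P i).trace.re = _
          rw [hPh i, trace_mul_comm, ← Matrix.mul_assoc, (hP.idem i).eq, trace_mul_comm]
      _ = s := by rw [hP.complete, Matrix.mul_one]
  have hblock (i : I) : ((hM.sum_mul_mul hPh).conjTranspose_mul_mul_same (P i)).sqrt.trace =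
      (hM.conjTranspose_mul_mul_same (P i)).sqrt.trace := by
    refine trace_sqrt_eq_of_charpoly_eq _ _ ?_
    rw [hPh i, hP.1.mul_sum_mul_mul (fun _ => M), Matrix.mul_assoc _ (P i), (hP.idem i).eq]
  calc ((hM.sum_mul_mul hPh).sqrt.trace).re
      = ∑ i, ((hM.conjTranspose_mul_mul_same (P i)).sqrt.trace).re := by
        rw [trace_sqrt_eq_sum_of_commute hP hPh _ fun i => hP.1.commute_sum_mul_mul _ i,
          Complex.re_sum]
        simp only [hblock]
    _ ≤ ∑ i, √s * √(t i) :=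
        Finset.sum_le_sum fun i _ => hM.re_trace_sqrt_conjTranspose_mul_mul_le (P i)
    _ = √s * ∑ i, √1 * √(t i) := by simp [Finset.mul_sum]
    _ ≤ √s * (√(∑ _ : I, 1) * √(∑ i, t i)) := by
        gcongr
        exact Real.sum_sqrt_mul_sqrt_le _ (fun _ => zero_le_one) ht
    _ = √(Fintype.card I) * s := by
        rw [hts, Finset.sum_const, Finset.card_univ, nsmul_one, mul_left_comm,
          Real.mul_self_sqrt hs]

end Matrix.PosSemidef

lemma mfid_eq_re_trace_sqrt {d : ℕ} {ρ σ M : Matrix (Fin d) (Fin d) ℂ} (hρ : ρ.PosSemidef)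
    (hσ : σ.PosSemidef) (hM : M.PosSemidef) (h : M = hσ.sqrt * ρ * hσ.sqrt) :
    mfid ρ σ = hM.sqrt.trace.re := by
  rw [mfid, dif_pos ⟨hρ, hσ⟩, Matrix.PosSemidef.trace_sqrt_eq_of_charpoly_eq _ hM]
  calc (hρ.sqrt * σ * hρ.sqrtᴴ).charpoly
        = ((hρ.sqrt * hσ.sqrt) * (hσ.sqrt * hρ.sqrt)).charpoly := by
        rw [hρ.posSemidef_sqrt.1.eq]
        conv_lhs => rw [← hσ.sqrt_mul_self]
        simp only [Matrix.mul_assoc]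
    _ = ((hσ.sqrt * hρ.sqrt) * (hρ.sqrt * hσ.sqrt)).charpoly := Matrix.charpoly_mul_comm _ _
    _ = M.charpoly := by
        rw [h]
        conv_rhs => rw [← hρ.sqrt_mul_self]
        simp only [Matrix.mul_assoc]

theorem pinching_fidelity_bound_general {d : ℕ} {I : Type*} [Fintype I]
    (Pr : I → Matrix (Fin d) (Fin d) ℂ)
    (hherm : ∀ i, (Pr i)ᴴ = Pr i)
    (horth : ∀ i j, i ≠ j → Pr i * Pr j = 0) (hcompl : ∑ i, Pr i = 1)
    (ρ σ : Matrix (Fin d) (Fin d) ℂ) (hρ : ρ.PosSemidef) (hσ : σ.PosSemidef)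
    (σi : I → Matrix (Fin d) (Fin d) ℂ)
    (hsum : σ = ∑ i, σi i) (hsupp : ∀ i, Pr i * σi i * Pr i = σi i) :
    mfid (∑ i, Pr i * ρ * Pr i) σ ≤ Real.sqrt (Fintype.card I) * mfid ρ σ := by
  have hP : CompleteOrthogonalIdempotents Pr :=
    CompleteOrthogonalIdempotents.iff_ortho_complete.mpr ⟨horth, hcompl⟩
  have hσP (j : I) : Commute hσ.sqrt (Pr j) := by
    refine hσ.commute_sqrt ?_
    rw [hsum, ← Finset.sum_congr rfl fun i _ => hsupp i]
    exact hP.1.commute_sum_mul_mul σi j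
  have hM : (hσ.sqrt * ρ * hσ.sqrt).PosSemidef := by
    simpa only [hσ.posSemidef_sqrt.1.eq] using hρ.conjTranspose_mul_mul_same hσ.sqrt
  rw [mfid_eq_re_trace_sqrt (hρ.sum_mul_mul hherm) hσ (hM.sum_mul_mul hherm)
      (mul_sum_mul_mul_mul_of_commute hσP).symm, mfid_eq_re_trace_sqrt hρ hσ hM rfl]
  exact hM.re_trace_sqrt_sum_mul_mul_le hP hherm

/-- Pinching bound for the fidelity: if `H = ⊕ᵢ Hᵢ` with orthogonal projections `Pr i` and
`σ = ∑ᵢ σᵢ` with `supp σᵢ ⊆ Hᵢ`, then `F(∑ᵢ Pr i ρ Pr i, σ) ≤ √|I| · F(ρ, σ)`. -/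
theorem pinching_fidelity_bound {d : ℕ} {I : Type*} [Fintype I]
    (Pr : I → Matrix (Fin d) (Fin d) ℂ)
    (hherm : ∀ i, (Pr i)ᴴ = Pr i) (hidem : ∀ i, Pr i * Pr i = Pr i)
    (horth : ∀ i j, i ≠ j → Pr i * Pr j = 0) (hcompl : ∑ i, Pr i = 1)
    (ρ σ : Matrix (Fin d) (Fin d) ℂ) (hρ : ρ.PosSemidef) (hσ : σ.PosSemidef)
    (σi : I → Matrix (Fin d) (Fin d) ℂ) (hσi : ∀ i, (σi i).PosSemidef)
    (hsum : σ = ∑ i, σi i) (hsupp : ∀ i, Pr i * σi i * Pr i = σi i) :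
    mfid (∑ i, Pr i * ρ * Pr i) σ ≤ Real.sqrt (Fintype.card I) * mfid ρ σ :=
  pinching_fidelity_bound_general Pr hherm horth hcompl ρ σ hρ hσ σi hsum hsupp
end

section
/- Let M_{AB} be a positive semidefinite operator on a tensor product H_A ⊗ H_B of finite-dimensional Hilbert spaces, and let M_B = Tr_A M_{AB} be its partial trace. Then M_{AB} ≤ |A| · I_A ⊗ M_B, where |A| = dim H_A. -/
/-!
Write `x = ∑ a, e_a ⊗ x_a`. For a positive semidefinite form `Q`, expanding
`0 ≤ ∑ a a', Q (v_a - v_a')` gives `Q (∑ a, v_a) ≤ |A| ∑ a, Q v_a`, so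
`Q x ≤ |A| ∑ a, Q (e_a ⊗ x_a)`. On the other side,
`⟪x, (I_A ⊗ M_B) x⟫ = ∑ a c, Q (e_c ⊗ x_a)`, which dominates the diagonal terms `c = a`.
-/

open scoped ComplexOrder Kronecker

namespace Matrix

variable {ι κ m n R 𝕜 : Type*}

def partialTraceFst [Fintype m] [AddCommMonoid R] (M : Matrix (m × n) (m × n) R) :
    Matrix n n R :=
  of fun j j' => ∑ i, M (i, j) (i, j')

section CommRing

variable [CommRing R] [StarRing R]

theorem IsHermitian.partialTraceFst [Fintype m] {M : Matrix (m × n) (m × n) R}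
    (hM : M.IsHermitian) : M.partialTraceFst.IsHermitian := by
  ext j j'
  simp only [Matrix.partialTraceFst, conjTranspose_apply, of_apply, star_sum, hM.apply]

theorem IsHermitian.kronecker {A : Matrix m m R} {B : Matrix n n R} (hA : A.IsHermitian)
    (hB : B.IsHermitian) : (A ⊗ₖ B).IsHermitian := by
  rw [IsHermitian, conjTranspose_kronecker, hA.eq, hB.eq]

theorem sum_sum_dotProduct_mulVec_sub [Fintype ι] [Fintype κ] (M : Matrix ι ι R)
    (v : κ → ι → R) :
    ∑ k, ∑ l, star (v k - v l) ⬝ᵥ M *ᵥ (v k - v l) =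
      2 * (Fintype.card κ * ∑ k, star (v k) ⬝ᵥ M *ᵥ v k -
        star (∑ k, v k) ⬝ᵥ M *ᵥ ∑ k, v k) := by
  simp only [star_sub, sub_dotProduct, mulVec_sub, dotProduct_sub, Finset.sum_sub_distrib,
    star_sum, mulVec_sum, dotProduct_sum, sum_dotProduct, Finset.sum_const, Finset.card_univ,
    nsmul_eq_mul, ← Finset.mul_sum]
  rw [Finset.sum_comm (f := fun k l => star (v l) ⬝ᵥ M *ᵥ v k)]
  ring

theorem dotProduct_mulVec_one_kronecker [Fintype m] [Fintype n] [DecidableEq m]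
    (N : Matrix n n R) (x : m × n → R) :
    star x ⬝ᵥ (1 ⊗ₖ N) *ᵥ x = ∑ i, star (Function.curry x i) ⬝ᵥ N *ᵥ Function.curry x i := by
  simp only [dotProduct, Pi.star_apply, mulVec, kroneckerMap_apply, one_apply, ite_mul,
    one_mul, zero_mul, Fintype.sum_prod_type, Finset.sum_ite_irrel, Finset.sum_const_zero,
    Finset.sum_ite_eq, Finset.mem_univ, if_true, Finset.mul_sum, Function.curry_apply]

theorem dotProduct_mulVec_partialTraceFst [Fintype m] [Fintype n] [DecidableEq m]
    (M : Matrix (m × n) (m × n) R) (y : n → R) :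
    star y ⬝ᵥ M.partialTraceFst *ᵥ y =
      ∑ i, star (Function.uncurry (Pi.single i y)) ⬝ᵥ M *ᵥ Function.uncurry (Pi.single i y) := by
  simp only [dotProduct, Pi.star_apply, mulVec, partialTraceFst, of_apply, Finset.sum_mul,
    Finset.mul_sum, Fintype.sum_prod_type, Function.uncurry_apply_pair, Pi.single_apply,
    ite_apply, Pi.zero_apply, mul_ite, mul_zero, Finset.sum_ite_irrel, Finset.sum_const_zero,
    Finset.sum_ite_eq', Finset.mem_univ, if_true, apply_ite star, star_zero, ite_mul, zero_mul]
  exact (Finset.sum_congr rfl fun _ _ => Finset.sum_comm).trans Finset.sum_comm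

end CommRing

theorem PosSemidef.dotProduct_mulVec_sum_le [RCLike 𝕜] [Fintype ι] [Fintype κ]
    {M : Matrix ι ι 𝕜} (hM : M.PosSemidef) (v : κ → ι → 𝕜) :
    star (∑ k, v k) ⬝ᵥ M *ᵥ ∑ k, v k ≤ Fintype.card κ * ∑ k, star (v k) ⬝ᵥ M *ᵥ v k := by
  have h : 0 ≤ ∑ k, ∑ l, star (v k - v l) ⬝ᵥ M *ᵥ (v k - v l) :=
    Finset.sum_nonneg fun k _ => Finset.sum_nonneg fun l _ => hM.dotProduct_mulVec_nonneg _
  rw [sum_sum_dotProduct_mulVec_sub] at h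
  exact sub_nonneg.mp (le_of_mul_le_mul_left (by simpa using h) two_pos)

end Matrix

theorem Function.sum_uncurry_single_curry {m n R : Type*} [Fintype m] [DecidableEq m]
    [AddCommMonoid R] (x : m × n → R) :
    ∑ i, Function.uncurry (Pi.single i (Function.curry x i)) = x := by
  ext ⟨i, j⟩
  simp only [Finset.sum_apply, Function.uncurry_apply_pair, Pi.single_apply, ite_apply,
    Function.curry_apply, Pi.zero_apply, Finset.sum_ite_eq, Finset.mem_univ, if_true]

open Matrix in
theorem psd_le_dim_smul_id_tensor_partial_trace_general {da db : Type*}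
    [Fintype da] [Fintype db] [DecidableEq da]
    (M : Matrix (da × db) (da × db) ℂ) (hM : M.PosSemidef) :
    (((Fintype.card da : ℂ) •
        ((1 : Matrix da da ℂ) ⊗ₖ
          (Matrix.of fun b b' : db => ∑ a : da, M (a, b) (a, b')))) - M).PosSemidef := by
  change ((Fintype.card da : ℂ) • (1 ⊗ₖ M.partialTraceFst) - M).PosSemidef
  refine .of_dotProduct_mulVec_nonneg
    ((isHermitian_one.kronecker hM.1.partialTraceFst).smul (.natCast _) |>.sub hM.1) fun x => ?_
  rw [sub_mulVec, dotProduct_sub, smul_mulVec, dotProduct_smul, smul_eq_mul, sub_nonneg]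
  set e : da → (db → ℂ) → da × db → ℂ := fun c y => Function.uncurry (Pi.single c y)
  set Q : (da × db → ℂ) → ℂ := fun v => star v ⬝ᵥ M *ᵥ v
  calc Q x = Q (∑ a, e a (Function.curry x a)) := by rw [Function.sum_uncurry_single_curry]
    _ ≤ Fintype.card da * ∑ a, Q (e a (Function.curry x a)) := hM.dotProduct_mulVec_sum_le _
    _ ≤ Fintype.card da * ∑ a, ∑ c, Q (e c (Function.curry x a)) := by
        gcongr with a
        exact Finset.single_le_sum (f := fun c => Q (e c (Function.curry x a)))
          (fun c _ => hM.dotProduct_mulVec_nonneg _) (Finset.mem_univ a)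
    _ = Fintype.card da * (star x ⬝ᵥ (1 ⊗ₖ M.partialTraceFst) *ᵥ x) := by
        simp only [dotProduct_mulVec_one_kronecker, dotProduct_mulVec_partialTraceFst, e, Q]

/-- For a positive semidefinite `M_{AB}` with partial trace `M_B = Tr_A M_{AB}`, one has
`M_{AB} ≤ |A| · I_A ⊗ M_B` in the Loewner order. -/
theorem psd_le_dim_smul_id_tensor_partial_trace {da db : Type*}
    [Fintype da] [Fintype db] [DecidableEq da] [DecidableEq db]
    (M : Matrix (da × db) (da × db) ℂ) (hM : M.PosSemidef) :
    (((Fintype.card da : ℂ) •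
        ((1 : Matrix da da ℂ) ⊗ₖ
          (Matrix.of fun b b' : db => ∑ a : da, M (a, b) (a, b')))) - M).PosSemidef :=
  psd_le_dim_smul_id_tensor_partial_trace_general M hM
end
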